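/- Let θ > 0, μ > 1, b > 0, a > 0 and φ > 0. Define the batch sizes m_i = ⌈θ(μ − 1 + i)·(ln(μ + i − 1))^{1+b}⌉ for i ≥ 1. If n₀ ≥ 1 is an integer satisfying n₀ ≥ 1 − μ + exp((a/(φθb))^{1/b}), then Σ_{i ≥ n₀} 1/m_{i+1} ≤ φ/a. -/

import Mathlib

/-!
With `x = μ + i`, the term `1/m_{i+1}` is at most `1/(θ x log x ^ (1+b))`, and
`F u = b⁻¹ (log u)^(-b)` is an antiderivative of `-1/(u log u ^ (1+b))`, whose absolute value
decreases on `(1, ∞)`. The mean value theorem therefore bounds each term by `θ⁻¹ (F (x-1) - F x)`;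
the sum telescopes to at most `θ⁻¹ F (μ + n₀ - 1)`, which the threshold on `n₀` makes `≤ φ/a`.
-/

open Real Finset

lemma hasDerivAt_inv_mul_log_rpow_neg {b u : ℝ} (hb : b ≠ 0) (hu : 1 < u) :
    HasDerivAt (fun y => b⁻¹ * log y ^ (-b)) (-(u * log u ^ (1 + b))⁻¹) u := by
  have hlog : 0 < log u := log_pos hu
  have h := ((hasDerivAt_rpow_const (p := -b) (Or.inl hlog.ne')).comp u
    (hasDerivAt_log (by positivity))).const_mul b⁻¹
  refine h.congr_deriv ?_
  rw [show -b - 1 = -(1 + b) by ring, rpow_neg hlog.le]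
  field_simp

lemma inv_mul_log_rpow_le_sub {b x : ℝ} (hb : 0 < b) (hx : 1 < x - 1) :
    (x * log x ^ (1 + b))⁻¹ ≤ b⁻¹ * log (x - 1) ^ (-b) - b⁻¹ * log x ^ (-b) := by
  have hderiv : ∀ u ∈ Set.Icc (x - 1) x, HasDerivAt (fun y => b⁻¹ * log y ^ (-b))
      (-(u * log u ^ (1 + b))⁻¹) u :=
    fun u hu => hasDerivAt_inv_mul_log_rpow_neg hb.ne' (hx.trans_le hu.1)
  obtain ⟨ξ, hξ, hslope⟩ := exists_hasDerivAt_eq_slope (fun y => b⁻¹ * log y ^ (-b))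
    (fun u => -(u * log u ^ (1 + b))⁻¹) (sub_one_lt x)
    (fun u hu => (hderiv u hu).continuousAt.continuousWithinAt)
    (fun u hu => hderiv u (Set.Ioo_subset_Icc_self hu))
  rw [sub_sub_cancel, div_one] at hslope
  have hξ_pos : 0 < ξ := by linarith [hξ.1]
  have hlogξ : 0 < log ξ := log_pos (hx.trans hξ.1)
  have hξx : ξ * log ξ ^ (1 + b) ≤ x * log x ^ (1 + b) := by
    have := hξ.2.le
    gcongr
    linarith
  linarith [inv_anti₀ (by positivity) hξx]

lemma log_rpow_neg_le_inv {b K y : ℝ} (hb : 0 < b) (hK : 0 < K)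
    (hy : exp (K ^ (1 / b)) ≤ y) :
    log y ^ (-b) ≤ K⁻¹ := by
  have hlog : K ^ (1 / b) ≤ log y := by
    rw [← log_exp (K ^ (1 / b))]
    exact log_le_log (exp_pos _) hy
  have hKle : K ≤ log y ^ b := by
    calc K = (K ^ (1 / b)) ^ b := by
          rw [← rpow_mul hK.le, one_div_mul_cancel hb.ne', rpow_one]
      _ ≤ log y ^ b := by gcongr
  rw [rpow_neg ((rpow_pos_of_pos hK _).le.trans hlog)]
  exact inv_anti₀ hK hKle

lemma summable_and_tsum_le_of_le_sub_succ {f g : ℕ → ℝ} (hf : ∀ i, 0 ≤ f i)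
    (hg : ∀ i, 0 ≤ g i) (hfg : ∀ i, f i ≤ g i - g (i + 1)) :
    Summable f ∧ ∑' i, f i ≤ g 0 := by
  have hsum : ∀ n, ∑ i ∈ range n, f i ≤ g 0 := fun n =>
    calc ∑ i ∈ range n, f i ≤ ∑ i ∈ range n, (g i - g (i + 1)) := sum_le_sum fun i _ => hfg i
      _ = g 0 - g n := sum_range_sub' g n
      _ ≤ g 0 := sub_le_self _ (hg n)
  exact ⟨summable_of_sum_range_le hf hsum, tsum_le_of_sum_range_le hf hsum⟩

theorem stmt_18_general (θ μ b a φ : ℝ)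
    (hθ : 0 < θ) (hb : 0 < b) (ha : 0 < a) (hφ : 0 < φ)
    (m : ℕ → ℤ)
    (hm : ∀ i : ℕ, 1 ≤ i → m i = ⌈θ * (μ - 1 + (i : ℝ)) * Real.log (μ + (i : ℝ) - 1) ^ (1 + b)⌉)
    (n₀ : ℕ)
    (hn₀ : 1 - μ + Real.exp ((a / (φ * θ * b)) ^ (1 / b)) ≤ (n₀ : ℝ)) :
    Summable (fun i : ℕ => ((m (n₀ + i + 1) : ℝ))⁻¹) ∧
      ∑' i : ℕ, ((m (n₀ + i + 1) : ℝ))⁻¹ ≤ φ / a := by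
  set K := a / (φ * θ * b)
  set x : ℕ → ℝ := fun i => μ + n₀ + i with hx
  have hx_ge : ∀ i, exp (K ^ (1 / b)) ≤ x i - 1 := fun i => by
    simp only [hx]; linarith [(i.cast_nonneg : (0 : ℝ) ≤ i)]
  have hx_gt : ∀ i, 1 < x i - 1 := fun i =>
    (one_lt_exp_iff.mpr (rpow_pos_of_pos (by positivity) _)).trans_le (hx_ge i)
  have hpos : ∀ i, 0 < θ * x i * log (x i) ^ (1 + b) := fun i => by
    have hx_pos : 0 < x i := by linarith [hx_gt i]
    have := log_pos (show 1 < x i by linarith [hx_gt i])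
    positivity
  have hm_ge : ∀ i, θ * x i * log (x i) ^ (1 + b) ≤ m (n₀ + i + 1) := fun i => by
    rw [hm _ (by omega)]
    refine le_of_eq_of_le ?_ (Int.le_ceil _)
    simp only [hx]; push_cast; ring_nf
  have hstep : ∀ i, ((m (n₀ + i + 1) : ℝ))⁻¹ ≤
      θ⁻¹ * (b⁻¹ * log (x i - 1) ^ (-b)) - θ⁻¹ * (b⁻¹ * log (x (i + 1) - 1) ^ (-b)) := fun i => by
    rw [show x (i + 1) - 1 = x i by simp only [hx]; push_cast; ring, ← mul_sub]
    calc ((m (n₀ + i + 1) : ℝ))⁻¹ ≤ θ⁻¹ * (x i * log (x i) ^ (1 + b))⁻¹ := by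
          rw [← mul_inv, ← mul_assoc]; exact inv_anti₀ (hpos i) (hm_ge i)
      _ ≤ _ := by gcongr; exact inv_mul_log_rpow_le_sub hb (hx_gt i)
  obtain ⟨hsummable, htsum⟩ := summable_and_tsum_le_of_le_sub_succ
    (fun i => inv_nonneg.mpr ((hpos i).le.trans (hm_ge i)))
    (fun i => by have := rpow_pos_of_pos (log_pos (hx_gt i)) (-b); positivity) hstep
  refine ⟨hsummable, htsum.trans ?_⟩
  calc θ⁻¹ * (b⁻¹ * log (x 0 - 1) ^ (-b)) ≤ θ⁻¹ * (b⁻¹ * K⁻¹) := by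
        gcongr; exact log_rpow_neg_le_inv hb (by positivity) (hx_ge 0)
    _ = φ / a := by simp only [K]; field_simp

/-- Tail-sum bound for the polynomial-logarithmic sample-rate schedule
`m_i = ⌈θ(μ−1+i) ln(μ+i−1)^{1+b}⌉`: once `n₀ ≥ 1 − μ + exp((a/(φθb))^{1/b})`,
the tail sum `Σ_{i ≥ n₀} 1/m_{i+1}` is at most `φ/a`. -/
theorem stmt_18 (θ μ b a φ : ℝ)
    (hθ : 0 < θ) (hμ : 1 < μ) (hb : 0 < b) (ha : 0 < a) (hφ : 0 < φ)
    (m : ℕ → ℤ)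
    (hm : ∀ i : ℕ, 1 ≤ i → m i = ⌈θ * (μ - 1 + (i : ℝ)) * Real.log (μ + (i : ℝ) - 1) ^ (1 + b)⌉)
    (n₀ : ℕ) (hn₀1 : 1 ≤ n₀)
    (hn₀ : 1 - μ + Real.exp ((a / (φ * θ * b)) ^ (1 / b)) ≤ (n₀ : ℝ)) :
    Summable (fun i : ℕ => ((m (n₀ + i + 1) : ℝ))⁻¹) ∧
      ∑' i : ℕ, ((m (n₀ + i + 1) : ℝ))⁻¹ ≤ φ / a :=
  stmt_18_general θ μ b a φ hθ hb ha hφ m hm n₀ hn₀
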